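/- Bounded staging set rule (SP_b): Let f be locally Lipschitz (e.g., polynomial), S ⊆ ℝⁿ bounded, p polynomial, ε > 0. Assume (i) as long as the solution has not entered P it remains in S, and (ii) ∇p(y)·f(y) ≥ ε for all y ∈ S. Then the solution satisfies φ(τ) ∈ P for some τ ∈ [0,T) where [0,T) is the maximal existence interval. -/

import Mathlib

open MvPolynomial Set Filter Topology Metric
open scoped ENNReal

/-!
Suppose the solution never enters `P`. Then it stays in the bounded set `S` for its whole
existence interval `[0, T)`, and along it `t ↦ p (φ t)` increases at rate at least `ε` while
staying below the maximum of `p` on the compact set `closure S`; hence `T < ∞`. But on `[0, T)`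
the velocity `f (φ t)` is bounded by the maximum of `‖f‖` on `closure S`, so `φ` has a limit at
`T`, and a Picard–Lindelöf solution started near that limit, with an existence time uniform
around it, continues `φ` beyond `T`, contradicting maximality.
-/

theorem MvPolynomial.hasDerivAt_eval_comp {σ : Type*} [Fintype σ] (p : MvPolynomial σ ℝ)
    {γ : ℝ → σ → ℝ} {γ' : σ → ℝ} {t : ℝ} (hγ : HasDerivAt γ γ' t) :
    HasDerivAt (fun s => eval (γ s) p) (∑ i, eval (γ t) (pderiv i p) * γ' i) t := by
  classical
  induction p using MvPolynomial.induction_on with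
  | C a => simpa using hasDerivAt_const t a
  | add p q hp hq => simpa [add_mul, Finset.sum_add_distrib] using hp.fun_add hq
  | mul_X p i hp =>
    have hsum : ∑ j, eval (γ t) (pderiv j (p * X i)) * γ' j
        = (∑ j, eval (γ t) (pderiv j p) * γ' j) * γ t i + eval (γ t) p * γ' i := by
      simp only [pderiv_mul, pderiv_X, eval_add, eval_mul, eval_X, add_mul,
        Finset.sum_add_distrib, Finset.sum_mul]
      congr 1
      · exact Finset.sum_congr rfl fun j _ => by ring
      · simp [Pi.single_apply]
    rw [hsum]
    simpa only [eval_mul, eval_X] using hp.fun_mul (hasDerivAt_pi.mp hγ i)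

theorem not_bddAbove_image_Ici_of_le_hasDerivAt {g g' : ℝ → ℝ} {ε : ℝ} (hε : 0 < ε)
    (hg : ∀ t ∈ Ici (0 : ℝ), HasDerivAt g (g' t) t) (hg' : ∀ t ∈ Ici (0 : ℝ), ε ≤ g' t) :
    ¬ BddAbove (g '' Ici 0) := by
  have hgrowth : ∀ t ∈ Ici (0 : ℝ), ε * t ≤ g t - g 0 := fun t ht => by
    simpa using (convex_Ici (0 : ℝ)).mul_sub_le_image_sub_of_le_deriv
      (fun s hs => (hg s hs).continuousAt.continuousWithinAt)
      (fun s hs => (hg s (interior_subset hs)).differentiableAt.differentiableWithinAt)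
      (fun s hs => (hg s (interior_subset hs)).deriv ▸ hg' s (interior_subset hs))
      0 self_mem_Ici t ht ht
  rintro ⟨M, hM⟩
  set t := (|M - g 0| + 1) / ε
  have ht : t ∈ Ici 0 := by simp only [mem_Ici, t]; positivity
  have hεt : ε * t = |M - g 0| + 1 := mul_div_cancel₀ _ hε.ne'
  have := hM (mem_image_of_mem g ht)
  linarith [hgrowth t ht, le_abs_self (M - g 0)]

section Continuation

variable {E : Type*} [NormedAddCommGroup E] [NormedSpace ℝ E]

theorem exists_tendsto_nhdsLT_of_norm_hasDerivAt_le [CompleteSpace E] {γ γ' : ℝ → E}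
    {a b C : ℝ} (hab : a < b) (hγ : ∀ t ∈ Ico a b, HasDerivAt γ (γ' t) t)
    (hC : ∀ t ∈ Ico a b, ‖γ' t‖ ≤ C) : ∃ x, Tendsto γ (𝓝[<] b) (𝓝 x) := by
  have hC0 : 0 ≤ C := (norm_nonneg _).trans (hC a ⟨le_rfl, hab⟩)
  have hlip : ∀ s ∈ Ico a b, ∀ u ∈ Ico a b, dist (γ s) (γ u) ≤ C * dist s u :=
    fun s hs u hu => by
    simpa only [dist_eq_norm] using (convex_Ico a b).norm_image_sub_le_of_norm_hasDerivWithin_le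
      (fun t ht => (hγ t ht).hasDerivWithinAt) hC hu hs
  refine cauchy_map_iff_exists_tendsto.mp (Metric.cauchy_iff.mpr ⟨inferInstance, fun ε hε => ?_⟩)
  set δ := ε / (C + 1)
  have hδ : 0 < δ := by positivity
  refine ⟨γ '' Ioo (max a (b - δ)) b, image_mem_map (Ioo_mem_nhdsLT (by simp [hab, hδ])), ?_⟩
  rintro _ ⟨s, hs, rfl⟩ _ ⟨u, hu, rfl⟩
  have hsu : dist s u < δ := by
    rw [Real.dist_eq, abs_sub_lt_iff]
    constructor <;> linarith [hs.2, hu.2, le_max_right a (b - δ), hs.1, hu.1]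
  calc dist (γ s) (γ u) ≤ C * dist s u :=
        hlip s ⟨(le_max_left _ _).trans hs.1.le, hs.2⟩ u ⟨(le_max_left _ _).trans hu.1.le, hu.2⟩
    _ ≤ C * δ := by gcongr
    _ < (C + 1) * δ := by linarith
    _ = ε := mul_div_cancel₀ _ (by linarith)

theorem LocallyLipschitz.exists_forall_mem_closedBall_exists_eq_hasDerivWithinAt
    [CompleteSpace E] {f : E → E} (hf : LocallyLipschitz f) (x : E) :
    ∃ r > (0 : ℝ), ∃ δ > (0 : ℝ), ∀ y ∈ closedBall x r, ∀ t₀ : ℝ, ∃ ψ : ℝ → E, ψ t₀ = y ∧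
      ∀ t ∈ Icc t₀ (t₀ + δ), HasDerivWithinAt ψ (f (ψ t)) (Icc t₀ (t₀ + δ)) t := by
  obtain ⟨L, U, hU, hLU⟩ := hf x
  obtain ⟨a, ha, haU⟩ := nhds_basis_closedBall.mem_iff.mp hU
  set K := ‖f x‖ + L * a + 1
  have hK : 0 < K := by positivity
  refine ⟨a / 2, by positivity, a / 2 / K, by positivity, fun y hy t₀ => ?_⟩
  have hbound : ∀ z ∈ closedBall x a, ‖f z‖ ≤ K := fun z hz => by
    have := (hLU.mono haU).dist_le_mul z hz x (mem_closedBall_self ha.le)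
    have := norm_sub_norm_le (f z) (f x)
    rw [← dist_eq_norm] at this
    nlinarith [mem_closedBall.mp hz, L.coe_nonneg]
  -- Picard–Lindelöf on `closedBall x a` from any point of `closedBall x (a / 2)`: the time
  -- `a / 2 / K` does not depend on the starting point since `‖f‖ ≤ K` on the larger ball.
  have hpl : IsPicardLindelof (fun _ => f) (tmin := t₀) (tmax := t₀ + a / 2 / K)
      ⟨t₀, left_mem_Icc.mpr (by linarith [show 0 < a / 2 / K by positivity])⟩ x
      ⟨a, ha.le⟩ ⟨a / 2, by positivity⟩ ⟨K, hK.le⟩ L :=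
    { lipschitzOnWith := fun _ _ => hLU.mono haU
      continuousOn := fun _ _ => continuousOn_const
      norm_le := fun _ _ z hz => hbound z hz
      mul_max_le := by
        change K * max (t₀ + a / 2 / K - t₀) (t₀ - t₀) ≤ a - a / 2
        rw [add_sub_cancel_left, sub_self, max_eq_left (by positivity), mul_div_cancel₀ _ hK.ne']
        linarith }
  exact hpl.exists_eq_forall_mem_Icc_hasDerivWithinAt hy

theorem hasDerivAt_piecewise_Iic_of_solutions {f : E → E} {φ ψ : ℝ → E} {a t₀ b : ℝ}
    (ht₀ : t₀ < b) (hφ : ∀ t ∈ Icc a t₀, HasDerivAt φ (f (φ t)) t)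
    (hψ : ∀ t ∈ Icc t₀ b, HasDerivWithinAt ψ (f (ψ t)) (Icc t₀ b) t) (hψφ : ψ t₀ = φ t₀) :
    ∀ t ∈ Ico a b, HasDerivAt ((Iic t₀).piecewise φ ψ) (f ((Iic t₀).piecewise φ ψ t)) t := by
  intro t ht
  rcases lt_trichotomy t t₀ with hlt | rfl | hgt
  · rw [show (Iic t₀).piecewise φ ψ t = φ t from piecewise_eq_of_mem _ _ _ hlt.le]
    refine (hφ t ⟨ht.1, hlt.le⟩).congr_of_eventuallyEq ?_
    filter_upwards [Iic_mem_nhds hlt] with s hs using piecewise_eq_of_mem _ _ _ hs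
  · rw [show (Iic t).piecewise φ ψ t = φ t from piecewise_eq_of_mem _ _ _ (mem_Iic.2 le_rfl)]
    have hleft : HasDerivWithinAt ((Iic t).piecewise φ ψ) (f (φ t)) (Iic t) t :=
      (hφ t ⟨ht.1, le_rfl⟩).hasDerivWithinAt.congr (fun s hs => piecewise_eq_of_mem _ _ _ hs)
        (piecewise_eq_of_mem _ _ _ (mem_Iic.2 le_rfl))
    have hright : HasDerivWithinAt ((Iic t).piecewise φ ψ) (f (φ t)) (Ici t) t := by
      refine hψφ ▸ ((hψ t ⟨le_rfl, ht₀.le⟩).mono_of_mem_nhdsWithin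
        (Icc_mem_nhdsGE ht₀)).congr (fun s hs => ?_) ?_
      · rcases (mem_Ici.mp hs).lt_or_eq with hts | rfl
        · exact piecewise_eq_of_notMem _ _ _ (not_le.mpr hts)
        · simp [hψφ]
      · simp [hψφ]
    simpa [Iic_union_Ici] using hleft.union hright
  · rw [show (Iic t₀).piecewise φ ψ t = ψ t from piecewise_eq_of_notMem _ _ _ (not_le.mpr hgt)]
    refine ((hψ t ⟨hgt.le, ht.2.le⟩).hasDerivAt (Icc_mem_nhds hgt ht.2)).congr_of_eventuallyEq ?_
    filter_upwards [Ioi_mem_nhds hgt] with s hs using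
      piecewise_eq_of_notMem _ _ _ (notMem_Iic.mpr hs)

theorem LocallyLipschitz.exists_extension_of_tendsto [CompleteSpace E] {f : E → E}
    (hf : LocallyLipschitz f) {φ : ℝ → E} {a b : ℝ} (hab : a < b)
    (hφ : ∀ t ∈ Ico a b, HasDerivAt φ (f (φ t)) t) {x : E} (hx : Tendsto φ (𝓝[<] b) (𝓝 x)) :
    ∃ b' > b, ∃ χ : ℝ → E, χ a = φ a ∧ ∀ t ∈ Ico a b', HasDerivAt χ (f (χ t)) t := by
  obtain ⟨r, hr, δ, hδ, hsol⟩ := hf.exists_forall_mem_closedBall_exists_eq_hasDerivWithinAt x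
  obtain ⟨t₀, ht₀x, ht₀⟩ : ∃ t₀, φ t₀ ∈ closedBall x r ∧ t₀ ∈ Ioo (max a (b - δ)) b :=
    ((hx.eventually_mem (closedBall_mem_nhds x hr)).and
      (Ioo_mem_nhdsLT (by simp [hab, hδ]))).exists
  obtain ⟨ψ, hψt₀, hψ⟩ := hsol (φ t₀) ht₀x t₀
  have hat₀ : a < t₀ := (le_max_left _ _).trans_lt ht₀.1
  have hbt₀ : b < t₀ + δ := by linarith [(le_max_right a (b - δ)).trans_lt ht₀.1]
  refine ⟨t₀ + δ, hbt₀, (Iic t₀).piecewise φ ψ, piecewise_eq_of_mem _ _ _ hat₀.le, ?_⟩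
  exact hasDerivAt_piecewise_Iic_of_solutions (by linarith)
    (fun t ht => hφ t ⟨ht.1, ht.2.trans_lt ht₀.2⟩) hψ hψt₀

theorem LocallyLipschitz.exists_extension_of_mapsTo_isBounded [ProperSpace E] {f : E → E}
    (hf : LocallyLipschitz f) {φ : ℝ → E} {a b : ℝ} (hab : a < b)
    (hφ : ∀ t ∈ Ico a b, HasDerivAt φ (f (φ t)) t) {S : Set E} (hS : Bornology.IsBounded S)
    (hφS : MapsTo φ (Ico a b) S) :
    ∃ b' > b, ∃ χ : ℝ → E, χ a = φ a ∧ ∀ t ∈ Ico a b', HasDerivAt χ (f (χ t)) t := by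
  obtain ⟨C, hC⟩ := hS.isCompact_closure.exists_bound_of_continuousOn hf.continuous.continuousOn
  obtain ⟨x, hx⟩ := exists_tendsto_nhdsLT_of_norm_hasDerivAt_le hab hφ
    (fun t ht => hC _ (subset_closure (hφS ht)))
  exact hf.exists_extension_of_tendsto hab hφ hx

end Continuation

theorem not_mapsTo_Ici_of_le_pderiv_sum {σ : Type*} [Fintype σ] {f : (σ → ℝ) → σ → ℝ}
    {φ : ℝ → σ → ℝ} (hφ : ∀ t ∈ Ici (0 : ℝ), HasDerivAt φ (f (φ t)) t) {S : Set (σ → ℝ)}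
    (hS : Bornology.IsBounded S) (p : MvPolynomial σ ℝ) {ε : ℝ} (hε : 0 < ε)
    (hlie : ∀ y ∈ S, ε ≤ ∑ i, eval y (pderiv i p) * f y i) : ¬ MapsTo φ (Ici 0) S := by
  intro hφS
  refine not_bddAbove_image_Ici_of_le_hasDerivAt hε (fun t ht => p.hasDerivAt_eval_comp (hφ t ht))
    (fun t ht => hlie _ (hφS ht)) ?_
  refine ((hS.isCompact_closure.image p.continuous_eval).bddAbove).mono ?_
  rintro _ ⟨t, ht, rfl⟩
  exact mem_image_of_mem _ (subset_closure (hφS ht))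

/-- Bounded staging set rule SP_b: for a locally Lipschitz ODE with right-maximal
solution `φ` on `[0,T)`, if the solution stays in the bounded set `S` as long as
it has not entered `P`, and the Lie derivative of the polynomial `p` is at least
`ε > 0` on `S`, then the solution enters `P` within its existence interval. -/
theorem staging_set_bounded (n : ℕ) (f : (Fin n → ℝ) → (Fin n → ℝ))
    (hf : LocallyLipschitz f)
    (T : ℝ≥0∞) (hT : 0 < T) (φ : ℝ → (Fin n → ℝ))
    (hsol : ∀ t : ℝ, 0 ≤ t → ENNReal.ofReal t < T → HasDerivAt φ (f (φ t)) t)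
    (hmax : ∀ (T' : ℝ) (ψ : ℝ → (Fin n → ℝ)), ψ 0 = φ 0 →
      (∀ t ∈ Set.Ico (0:ℝ) T', HasDerivAt ψ (f (ψ t)) t) → ENNReal.ofReal T' ≤ T)
    (S P : Set (Fin n → ℝ)) (hSb : Bornology.IsBounded S)
    (p : MvPolynomial (Fin n) ℝ) (ε : ℝ) (hε : 0 < ε)
    (hstage : ∀ t : ℝ, 0 ≤ t → ENNReal.ofReal t < T →
      (∀ s ∈ Set.Icc (0:ℝ) t, φ s ∉ P) → φ t ∈ S)
    (hlie : ∀ y ∈ S, ε ≤ ∑ i : Fin n, eval y (pderiv i p) * f y i) :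
    ∃ τ : ℝ, 0 ≤ τ ∧ ENNReal.ofReal τ < T ∧ φ τ ∈ P := by
  by_contra! hP
  have hS : ∀ t, 0 ≤ t → ENNReal.ofReal t < T → φ t ∈ S := fun t ht htT =>
    hstage t ht htT fun s hs => hP s hs.1 ((ENNReal.ofReal_le_ofReal hs.2).trans_lt htT)
  have hT_ne_top : T ≠ ⊤ := by
    rintro rfl
    exact not_mapsTo_Ici_of_le_pderiv_sum (fun t ht => hsol t ht ENNReal.ofReal_lt_top) hSb p hε
      hlie fun t ht => hS t ht ENNReal.ofReal_lt_top
  have hlt : ∀ t ∈ Ico 0 T.toReal, ENNReal.ofReal t < T := fun t ht =>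
    (ENNReal.ofReal_lt_iff_lt_toReal ht.1 hT_ne_top).mpr ht.2
  obtain ⟨T', hT', χ, hχ0, hχ⟩ := hf.exists_extension_of_mapsTo_isBounded
    (ENNReal.toReal_pos hT.ne' hT_ne_top) (fun t ht => hsol t ht.1 (hlt t ht)) hSb
    (fun t ht => hS t ht.1 (hlt t ht))
  have hT'T := hmax T' χ hχ0 hχ
  rw [← ENNReal.ofReal_toReal hT_ne_top, ENNReal.ofReal_le_ofReal_iff ENNReal.toReal_nonneg] at hT'T
  exact hT'.not_ge hT'T
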